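/- arXiv:2501.06531 — 5 statements merged into one kernel-verified Lean document; each statement's English description precedes it below -/
import Mathlib

section
/- (Lemma 4.5, warmup safety within a version) Fix a version v. Suppose at most f_r ≤ f of n = 3f+1 validators are adversarial, honest validators start version v with average budget B̄_v, every certified decrement transaction Tx (with Tx.δ < 0) is signed by at least 2f+1−f_r honest validators each deducting |Tx.δ| from their budget, and no honest validator's budget falls below 0. Then for every subset T of the certified transactions of version v, the sum of values Val(T) = Σ_{Tx∈T} Tx.δ satisfies Val(T) ≥ −(1/η)·B̄_v, where η = (f+1)/(2f+1). -/
/-- Lemma 4.5 (warmup safety within a version). With `n = 3f+1` validators of which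
`f_r ≤ f` are adversarial, honest validators (the set `Hon`, of size `3f+1-f_r`)
enter version `v` with budgets `bud₀` whose average is `Bavg_v`; every certified
decrement transaction is signed by at least `2f+1-f_r` honest validators, each
deducting its value from their budget, and the resulting honest budgets `bud`
never fall below `0`. Then for every subset `T` of the certified transactions,
`Val(T) ≥ -(1/η)·Bavg_v` where `η = (f+1)/(2f+1)`. -/
theorem warmup_safety_within_version
    {Vld Tx : Type*} [DecidableEq Vld] [DecidableEq Tx]
    (f fr : ℕ) (hfr : fr ≤ f)
    (Hon : Finset Vld) (hHon : Hon.card = 3 * f + 1 - fr)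
    (C : Finset Tx)                 -- certified transactions of version v
    (δ : Tx → ℝ)                    -- value of each transaction
    (bud₀ bud : Vld → ℝ)            -- budget on entering v, and current budget
    (sign : Tx → Finset Vld)        -- honest signers of each transaction
    (hsigners : ∀ t ∈ C, δ t < 0 → 2 * f + 1 - fr ≤ (sign t ∩ Hon).card)
    (haccount : ∀ j ∈ Hon,
      bud j ≤ bud₀ j + ∑ t ∈ C.filter (fun t => δ t < 0 ∧ j ∈ sign t), δ t)
    (hnonneg : ∀ j ∈ Hon, 0 ≤ bud j)
    (η Bavg : ℝ) (hη : η = ((f : ℝ) + 1) / (2 * (f : ℝ) + 1))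
    (hBavg : Bavg = (∑ j ∈ Hon, bud₀ j) / (Hon.card : ℝ)) :
    ∀ T ⊆ C, -(1 / η) * Bavg ≤ ∑ t ∈ T, δ t := by
  intro T hT
  classical
  have hb0 : ∀ j ∈ Hon, 0 ≤ bud₀ j := by
    intro j hj
    have h1 := haccount j hj
    have h2 := hnonneg j hj
    have h3 : ∑ t ∈ C.filter (fun t => δ t < 0 ∧ j ∈ sign t), δ t ≤ 0 :=
      Finset.sum_nonpos (fun t ht => le_of_lt (Finset.mem_filter.mp ht).2.1)
    linarith
  set D := C.filter (fun t => δ t < 0) with hD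
  set S := ∑ j ∈ Hon, bud₀ j with hS
  have hS0 : 0 ≤ S := Finset.sum_nonneg hb0
  -- step 1: value of T is at least the value of all negative certified txs
  have hTN : ∑ t ∈ D, δ t ≤ ∑ t ∈ T, δ t := by
    have hsplit : ∑ t ∈ T, δ t = ∑ t ∈ T.filter (fun t => δ t < 0), δ t
        + ∑ t ∈ T.filter (fun t => ¬ δ t < 0), δ t :=
      (Finset.sum_filter_add_sum_filter_not T _ δ).symm
    have hpos : 0 ≤ ∑ t ∈ T.filter (fun t => ¬ δ t < 0), δ t :=
      Finset.sum_nonneg (fun t ht => le_of_not_gt (Finset.mem_filter.mp ht).2)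
    have hsub : T.filter (fun t => δ t < 0) ⊆ D := by
      intro t ht
      rw [hD, Finset.mem_filter]
      have := Finset.mem_filter.mp ht
      exact ⟨hT this.1, this.2⟩
    have hmono : ∑ t ∈ D, δ t ≤ ∑ t ∈ T.filter (fun t => δ t < 0), δ t := by
      rw [← Finset.sum_sdiff hsub]
      have : ∑ t ∈ D \ T.filter (fun t => δ t < 0), δ t ≤ 0 :=
        Finset.sum_nonpos (fun t ht => by
          have := Finset.mem_filter.mp (Finset.mem_sdiff.mp ht).1
          exact le_of_lt this.2)
      linarith
    linarith
  -- step 2: accounting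
  have hswap : ∑ j ∈ Hon, ∑ t ∈ C.filter (fun t => δ t < 0 ∧ j ∈ sign t), δ t
      = ∑ t ∈ D, ((sign t ∩ Hon).card : ℝ) * δ t := by
    have h1 : ∀ j, ∑ t ∈ C.filter (fun t => δ t < 0 ∧ j ∈ sign t), δ t
        = ∑ t ∈ D, if j ∈ sign t then δ t else 0 := by
      intro j
      rw [Finset.sum_filter, hD, Finset.sum_filter]
      apply Finset.sum_congr rfl
      intro t _
      by_cases h : δ t < 0 <;> by_cases h2 : j ∈ sign t <;> simp [h, h2]
    simp_rw [h1]
    rw [Finset.sum_comm]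
    apply Finset.sum_congr rfl
    intro t _
    rw [← Finset.sum_filter]
    rw [Finset.sum_const]
    have : Hon.filter (fun j => j ∈ sign t) = sign t ∩ Hon := by
      ext j; simp [Finset.mem_inter, Finset.mem_filter, and_comm]
    rw [this, nsmul_eq_mul]
  have key : 0 ≤ S + ((2 * f + 1 : ℝ) - fr) * ∑ t ∈ D, δ t := by
    have h1 : 0 ≤ ∑ j ∈ Hon, bud j := Finset.sum_nonneg hnonneg
    have h2 : ∑ j ∈ Hon, bud j ≤ S + ∑ t ∈ D, ((sign t ∩ Hon).card : ℝ) * δ t := by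
      rw [← hswap, hS, ← Finset.sum_add_distrib]
      exact Finset.sum_le_sum haccount
    have h3 : ∑ t ∈ D, ((sign t ∩ Hon).card : ℝ) * δ t
        ≤ ∑ t ∈ D, ((2 * f + 1 : ℝ) - fr) * δ t := by
      apply Finset.sum_le_sum
      intro t ht
      have htD := Finset.mem_filter.mp ht
      have hc := hsigners t htD.1 htD.2
      have hcath : ((2 * f + 1 - fr : ℕ) : ℝ) ≤ ((sign t ∩ Hon).card : ℝ) := by
        exact_mod_cast hc
      have hcast : ((2 * f + 1 - fr : ℕ) : ℝ) = (2 * f + 1 : ℝ) - fr := by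
        have : fr ≤ 2 * f + 1 := by omega
        push_cast [this]; ring
      rw [hcast] at hcath
      exact mul_le_mul_of_nonpos_right hcath (le_of_lt htD.2)
    rw [← Finset.mul_sum] at h3
    linarith
  -- step 3: arithmetic
  have hcardR : (Hon.card : ℝ) = (3 * f + 1 : ℝ) - fr := by
    rw [hHon]
    have : fr ≤ 3 * f + 1 := by omega
    push_cast [this]; ring
  have hfR : (fr : ℝ) ≤ f := by exact_mod_cast hfr
  have hd1 : (0:ℝ) < (2 * f + 1 : ℝ) - fr := by
    have : (0:ℝ) ≤ (f:ℝ) := Nat.cast_nonneg f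
    linarith
  have hd2 : (0:ℝ) < (3 * f + 1 : ℝ) - fr := by
    have : (0:ℝ) ≤ (f:ℝ) := Nat.cast_nonneg f
    linarith
  have hηval : -(1 / η) * Bavg = -((2 * (f:ℝ) + 1) / ((f:ℝ) + 1)) * (S / ((3 * f + 1 : ℝ) - fr)) := by
    rw [hη, hBavg, hcardR]
    rw [one_div_div]
  rw [hηval]
  have hstep : -((2 * (f:ℝ) + 1) / ((f:ℝ) + 1)) * (S / ((3 * f + 1 : ℝ) - fr))
      ≤ -(S / ((2 * f + 1 : ℝ) - fr)) := by
    rw [neg_mul, neg_le_neg_iff, div_mul_div_comm, div_le_div_iff₀ hd1 (by positivity)]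
    have hkey : ((f:ℝ) + 1) * ((3 * f + 1 : ℝ) - fr) ≤ (2 * (f:ℝ) + 1) * ((2 * f + 1 : ℝ) - fr) := by
      nlinarith [mul_nonneg (Nat.cast_nonneg f : (0:ℝ) ≤ f) (sub_nonneg.mpr hfR)]
    nlinarith
  have hstep2 : -(S / ((2 * f + 1 : ℝ) - fr)) ≤ ∑ t ∈ D, δ t := by
    rw [neg_le, le_div_iff₀ hd1]
    nlinarith
  linarith
end

section
/- (Lemma 4.7, versions form a chain) In a directed graph on versions rooted at v₀ where each non-root version has exactly one parent, if every honest validator's sequence of adopted versions follows parent links, every certified version is adopted by at least 2f+1 of the 3f+1 validators, at most f validators are adversarial, and no honest validator adopts two versions that are incomparable under the ancestor relation, then the set of certified versions is totally ordered by the ancestor relation, i.e., forms a chain v₀, v₁, …, v_k with parent(v_i) = v_{i−1}. -/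
/-- Lemma 4.7 (versions form a chain). Versions form a graph rooted at `v₀` with a
parent function; `anc v v'` (the reflexive-transitive closure of the parent link)
means `v` is an ancestor of `v'`. Each version `v` is certified if at least `2f+1`
of the `3f+1` validators signed transactions with version `v`; at most `f`
validators are adversarial; an honest validator only signs for two versions if
one is an ancestor of the other. Then any two certified versions are comparable
under the ancestor relation (so the certified versions form a chain from `v₀`). -/
theorem certified_versions_form_chain
    {Vld Version : Type*} [DecidableEq Vld]
    (f : ℕ) (parent : Version → Version) (v₀ : Version)
    (anc : Version → Version → Prop)
    (hanc : anc = Relation.ReflTransGen (fun a b => parent b = a))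
    (V B : Finset Vld)
    (hV : V.card = 3 * f + 1) (hB : B ⊆ V) (hBcard : B.card ≤ f)
    (signers : Version → Finset Vld)
    (hsub : ∀ v, signers v ⊆ V)
    (honest_chain : ∀ j ∈ V, j ∉ B → ∀ v v',
      j ∈ signers v → j ∈ signers v' → anc v v' ∨ anc v' v)
    (certified : Version → Prop)
    (hcert : ∀ v, certified v ↔ 2 * f + 1 ≤ (signers v).card) :
    ∀ v v', certified v → certified v' → anc v v' ∨ anc v' v := by
  intro v v' hv hv'
  rw [hcert] at hv hv'
  have hinter : f + 1 ≤ ((signers v) ∩ (signers v')).card := by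
    have h1 : (signers v ∪ signers v').card ≤ V.card :=
      Finset.card_le_card (Finset.union_subset (hsub v) (hsub v'))
    have h2 := Finset.card_union_add_card_inter (signers v) (signers v')
    omega
  have hBle : ((signers v ∩ signers v') \ B).Nonempty := by
    rw [← Finset.card_pos]
    have := Finset.card_le_card (Finset.inter_subset_left (s₁ := signers v ∩ signers v') (s₂ := B))
    have hle : ((signers v ∩ signers v') ∩ B).card ≤ B.card :=
      Finset.card_le_card (Finset.inter_subset_right)
    have := Finset.card_sdiff_add_card_inter (signers v ∩ signers v') B
    omega
  obtain ⟨j, hj⟩ := hBle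
  rw [Finset.mem_sdiff, Finset.mem_inter] at hj
  exact honest_chain j (hsub v hj.1.1) hj.2 v v' hj.1.1 hj.1.2
end

section
/- (Lemma 4.9, budget-value bound) Under the bounded counter protocol, for any certified version v_i, the average budget of honest validators at the time they adopt v_i satisfies B̄_{v_i} ≤ η·(Bal₀ + Val(H(v_i)) + Val(D_i⁻)), where η = (f+1)/(2f+1), H(v_i) is the history of v_i (transactions included in version updates up to v_i), and D_i⁻ is the set of certified decrement transactions with versions before v_i not included in H(v_i). -/
/-- Lemma 4.9 (budget-value bound), abstract accounting model. Honest validators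
form the set `Hon` of size `3f+1-f_r` (with `f_r ≤ f`); each starts with budget
`η·Bal₀`; for each certified decrement transaction it signed, a validator adds
its (negative) value `δ t` to its budget; for each transaction in the history
`Hist` it adds `η·δ t`; and for each decrement in `Hist` it previously signed it
reclaims `-δ t`. Every certified decrement is signed by at least `2f+1-f_r`
honest validators. Then the average honest budget satisfies
`B̄ ≤ η·(Bal₀ + Val(Hist) + Val(D⁻))`, where `D⁻` is the set of certified
decrements not in the history. -/
theorem budget_value_bound
    {Vld Tx : Type*} [DecidableEq Vld] [DecidableEq Tx]
    (f fr : ℕ) (hfr : fr ≤ f)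
    (Hon : Finset Vld) (hHon : Hon.card = 3 * f + 1 - fr)
    (Bal₀ : ℝ) (hBal : 0 ≤ Bal₀)
    (η : ℝ) (hη : η = ((f : ℝ) + 1) / (2 * (f : ℝ) + 1))
    (C : Finset Tx)                 -- certified transactions (versions up to v_{i-1})
    (δ : Tx → ℝ)
    (Hist : Finset Tx) (hHist : Hist ⊆ C)     -- history of version v_i
    (Dneg : Finset Tx)
    (hDneg : Dneg = (C \ Hist).filter (fun t => δ t < 0))
    (sign : Vld → Finset Tx)        -- decrement transactions signed by each validator
    (hsign : ∀ j ∈ Hon, sign j ⊆ C.filter (fun t => δ t < 0))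
    (hsigners : ∀ t ∈ C, δ t < 0 →
      2 * f + 1 - fr ≤ (Hon.filter (fun j => t ∈ sign j)).card)
    (bud : Vld → ℝ)
    (haccount : ∀ j ∈ Hon,
      bud j = η * Bal₀ + (∑ t ∈ sign j, δ t)
        + (∑ t ∈ Hist, η * δ t) + (∑ t ∈ sign j ∩ Hist, -δ t)) :
    (∑ j ∈ Hon, bud j) / (Hon.card : ℝ) ≤
      η * (Bal₀ + (∑ t ∈ Hist, δ t) + (∑ t ∈ Dneg, δ t)) := by

  have hfr3 : fr ≤ 3 * f + 1 := by omega
  have hHonR : (Hon.card : ℝ) = 3 * (f : ℝ) + 1 - (fr : ℝ) := by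
    rw [hHon]; push_cast [Nat.cast_sub hfr3]; ring
  have hNpos : (0:ℝ) < (Hon.card : ℝ) := by
    rw [hHonR]
    have : (fr : ℝ) ≤ (f : ℝ) := by exact_mod_cast hfr
    linarith
  have hDnegneg : ∀ t ∈ Dneg, δ t < 0 := by
    intro t ht; rw [hDneg] at ht; exact (Finset.mem_filter.mp ht).2
  have hSDneg : (∑ t ∈ Dneg, δ t) ≤ 0 :=
    Finset.sum_nonpos (fun t ht => le_of_lt (hDnegneg t ht))
  have hmR : ((2 * f + 1 - fr : ℕ) : ℝ) = 2 * (f : ℝ) + 1 - (fr : ℝ) := by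
    push_cast [Nat.cast_sub (by omega : fr ≤ 2 * f + 1)]; ring
  -- rewrite each budget
  have h1 : ∀ j ∈ Hon, bud j = η * Bal₀ + (∑ t ∈ Hist, η * δ t)
      + ∑ t ∈ Dneg.filter (fun t => t ∈ sign j), δ t := by
    intro j hj
    have heq : Dneg.filter (fun t => t ∈ sign j) = sign j \ Hist := by
      ext t
      simp only [Finset.mem_filter, Finset.mem_sdiff, hDneg]
      constructor
      · rintro ⟨⟨⟨_, htH⟩, _⟩, hts⟩; exact ⟨hts, htH⟩
      · rintro ⟨hts, htH⟩
        have h := hsign j hj hts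
        simp only [Finset.mem_filter] at h
        exact ⟨⟨⟨h.1, htH⟩, h.2⟩, hts⟩
    have hsd : ∑ t ∈ sign j \ Hist, δ t
        = (∑ t ∈ sign j, δ t) - ∑ t ∈ sign j ∩ Hist, δ t := by
      rw [← Finset.sdiff_inter_self_left (sign j) Hist]
      exact Finset.sum_sdiff_eq_sub Finset.inter_subset_left
    rw [haccount j hj, heq, hsd, Finset.sum_neg_distrib]
    ring
  have key : (∑ j ∈ Hon, bud j) ≤
      (Hon.card : ℝ) * (η * Bal₀ + ∑ t ∈ Hist, η * δ t)
        + (2 * (f:ℝ) + 1 - (fr:ℝ)) * ∑ t ∈ Dneg, δ t := by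
    rw [Finset.sum_congr rfl h1]
    rw [Finset.sum_add_distrib, Finset.sum_const, nsmul_eq_mul, Finset.mul_sum]
    gcongr ?_ + ?_
    · rfl
    have hswap : (∑ j ∈ Hon, ∑ t ∈ Dneg.filter (fun t => t ∈ sign j), δ t)
        = ∑ t ∈ Dneg, ((Hon.filter (fun j => t ∈ sign j)).card : ℝ) * δ t := by
      simp only [Finset.sum_filter]
      rw [Finset.sum_comm]
      refine Finset.sum_congr rfl (fun t ht => ?_)
      rw [← Finset.sum_filter, Finset.sum_const, nsmul_eq_mul]
    rw [hswap]
    refine Finset.sum_le_sum (fun t ht => ?_)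
    have htC : t ∈ C := by
      rw [hDneg] at ht
      exact (Finset.mem_sdiff.mp (Finset.mem_filter.mp ht).1).1
    have hcard := hsigners t htC (hDnegneg t ht)
    have hcardR : 2 * (f:ℝ) + 1 - (fr:ℝ)
        ≤ ((Hon.filter (fun j => t ∈ sign j)).card : ℝ) := by
      rw [← hmR]; exact_mod_cast hcard
    exact mul_le_mul_of_nonpos_right hcardR (le_of_lt (hDnegneg t ht))
  -- finish
  have hηN : η * (Hon.card : ℝ) ≤ 2 * (f:ℝ) + 1 - (fr:ℝ) := by
    have hfrR : (fr:ℝ) ≤ (f:ℝ) := by exact_mod_cast hfr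
    have h2f : (0:ℝ) < 2 * (f:ℝ) + 1 := by positivity
    rw [hη, hHonR, div_mul_eq_mul_div, div_le_iff₀ h2f]
    nlinarith [sq_nonneg ((f:ℝ) - (fr:ℝ))]
  have hηpos : 0 ≤ η := by
    rw [hη]; positivity
  rw [div_le_iff₀ hNpos]
  refine key.trans ?_
  have hmul : ∑ t ∈ Hist, η * δ t = η * ∑ t ∈ Hist, δ t := by
    rw [Finset.mul_sum]
  rw [hmul]
  nlinarith [mul_le_mul_of_nonpos_right hηN hSDneg]
end

section
/- (Theorem 4.10, global safety of the bounded counter) Combining the warmup lemma and budget-value lemma: for T = H(v_k) ∪ D_k⁻ ∪ C_{v_k}⁻ (history of the latest version, excluded certified decrements, and certified decrements of the latest version), Val(T) ≥ −Bal₀; hence the balance Bal₀ + Val(T) never becomes negative for any set of transactions executed by honest validators. -/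
/-- Theorem 4.10 (global safety of the bounded counter). Let `Hk` be the history
of the latest version `v_k`, `Dk` the excluded certified decrements, and `Ck` the
certified decrements of version `v_k`, pairwise disjoint. Assuming the warmup
lemma `Val(Ck) ≥ -(1/η)·B̄` and the budget-value lemma
`B̄ ≤ η·(Bal₀ + Val(Hk) + Val(Dk))`, the total value of
`T = Hk ∪ Dk ∪ Ck` satisfies `Val(T) ≥ -Bal₀`; hence `Bal₀ + Val(T) ≥ 0`. -/
theorem bounded_counter_global_safety
    {Tx : Type*} [DecidableEq Tx]
    (f : ℕ) (η Bal₀ Bavg : ℝ)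
    (hη : η = ((f : ℝ) + 1) / (2 * (f : ℝ) + 1))
    (δ : Tx → ℝ)
    (Hk Dk Ck : Finset Tx)
    (hHD : Disjoint Hk Dk) (hHC : Disjoint Hk Ck) (hDC : Disjoint Dk Ck)
    (hwarmup : -(1 / η) * Bavg ≤ ∑ t ∈ Ck, δ t)
    (hbudget : Bavg ≤ η * (Bal₀ + (∑ t ∈ Hk, δ t) + (∑ t ∈ Dk, δ t))) :
    -Bal₀ ≤ ∑ t ∈ Hk ∪ Dk ∪ Ck, δ t ∧
      0 ≤ Bal₀ + ∑ t ∈ Hk ∪ Dk ∪ Ck, δ t := by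
  have hηpos : 0 < η := by
    rw [hη]
    positivity
  have hsum : ∑ t ∈ Hk ∪ Dk ∪ Ck, δ t
      = (∑ t ∈ Hk, δ t) + (∑ t ∈ Dk, δ t) + (∑ t ∈ Ck, δ t) := by
    rw [Finset.sum_union (by
      rw [Finset.disjoint_union_left]; exact ⟨hHC, hDC⟩),
      Finset.sum_union hHD]
  have key : -(Bal₀ + (∑ t ∈ Hk, δ t) + (∑ t ∈ Dk, δ t)) ≤ ∑ t ∈ Ck, δ t := by
    refine le_trans ?_ hwarmup
    rw [neg_le, ← neg_mul, neg_neg]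
    rw [div_mul_eq_mul_div, one_mul, div_le_iff₀ hηpos] at *
    nlinarith [mul_le_mul_of_nonneg_right hbudget (le_of_lt hηpos)]
  constructor <;> (rw [hsum]; linarith)
end

section
/- (Lemma B.2, collective counter versions form a chain under paths) Let versions form a DAG rooted at v₀ where each non-root version v has a nonempty set parents(v), and honest validators only move from version v to v' if v ∈ parents(v'). If every certified version has ≥ 2f+1 signers among 3f+1 validators with ≤ f adversarial, then the set of certified versions is totally ordered by reachability: for any two certified versions v, v', there is a directed path from v to v' or from v' to v. -/
/-- Lemma B.2 (collective counter versions form a chain under paths). Versions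
form a DAG rooted at `v₀` where each non-root version has a set of parents;
`reach v v'` (reflexive-transitive closure of the parent-set link) means there
is a directed path from `v'` back to `v`. A version is certified if at least
`2f+1` of the `3f+1` validators (at most `f` adversarial) signed transactions
with that version, and an honest validator never signs for two mutually
unreachable versions. Then any two certified versions are connected by a
directed path in one direction or the other. -/
theorem collective_versions_form_chain
    {Vld Version : Type*} [DecidableEq Vld]
    (f : ℕ) (parents : Version → Finset Version) (v₀ : Version)
    (reach : Version → Version → Prop)
    (hreach : reach = Relation.ReflTransGen (fun a b => a ∈ parents b))
    (V B : Finset Vld)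
    (hV : V.card = 3 * f + 1) (hB : B ⊆ V) (hBcard : B.card ≤ f)
    (signers : Version → Finset Vld)
    (hsub : ∀ v, signers v ⊆ V)
    (honest_chain : ∀ j ∈ V, j ∉ B → ∀ v v',
      j ∈ signers v → j ∈ signers v' → reach v v' ∨ reach v' v)
    (certified : Version → Prop)
    (hcert : ∀ v, certified v ↔ 2 * f + 1 ≤ (signers v).card) :
    ∀ v v', certified v → certified v' → reach v v' ∨ reach v' v := by
  intro v v' hc hc'
  rw [hcert] at hc hc'
  have hinter : f + 1 ≤ (signers v ∩ signers v').card := by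
    have h1 := Finset.card_union_le (signers v) (signers v')
    have h2 : (signers v ∪ signers v').card ≤ V.card :=
      Finset.card_le_card (Finset.union_subset (hsub v) (hsub v'))
    have h3 := Finset.card_inter_add_card_union (signers v) (signers v')
    omega
  have : B.card < (signers v ∩ signers v').card := by omega
  have hne : ¬ (signers v ∩ signers v' ⊆ B) := fun hsubB => absurd (Finset.card_le_card hsubB) (by omega)
  obtain ⟨j, hj, hjB⟩ := Finset.not_subset.mp hne
  have hjv := (Finset.mem_inter.mp hj).1
  have hjv' := (Finset.mem_inter.mp hj).2
  exact honest_chain j (hsub v hjv) hjB v v' hjv hjv'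
end
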